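/- arXiv:2509.24909 — 7 statements merged into one kernel-verified Lean document; each statement's English description precedes it below -/
import Mathlib

section
/- Let p > q ≥ 1 be real numbers. The function h(x) = (x^p - x^q)/(x - 1), defined on [0,1) (with h(0)=0), is strictly increasing on [0,1). -/
/-!
Write `r = p - q > 0`. The numerator of `h'(x)` is `x ^ (q - 1)` times
`(1 - x ^ r) (1 + (q - 1)(1 - x)) - r x ^ r (1 - x)`. Since `q ≥ 1`, this is positive on `(0, 1)`
as soon as `r x ^ r (1 - x) < 1 - x ^ r`, i.e. `x ^ r (1 + r (1 - x)) < 1`; and indeed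
`x ^ r (1 + r (1 - x)) < exp (r (x - 1)) exp (r (1 - x)) = 1` by `log x < x - 1` and `1 + t ≤ exp t`.
-/

open Real Set

lemma rpow_mul_one_add_mul_one_sub_lt_one {x r : ℝ} (hx0 : 0 < x) (hx1 : x < 1) (hr : 0 < r) :
    x ^ r * (1 + r * (1 - x)) < 1 := by
  have hrpow : x ^ r < exp (r * (x - 1)) := by
    rw [rpow_def_of_pos hx0, exp_lt_exp, mul_comm]
    exact mul_lt_mul_of_pos_left (log_lt_sub_one_of_pos hx0 hx1.ne) hr
  calc x ^ r * (1 + r * (1 - x))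
      < exp (r * (x - 1)) * (1 + r * (1 - x)) :=
        mul_lt_mul_of_pos_right hrpow (by nlinarith)
    _ ≤ exp (r * (x - 1)) * exp (r * (1 - x)) := by
        gcongr
        linarith [add_one_le_exp (r * (1 - x))]
    _ = 1 := by rw [← exp_add]; ring_nf; exact exp_zero

lemma one_sub_rpow_mul_one_add_sub_pos {x r s : ℝ} (hx0 : 0 < x) (hx1 : x < 1) (hr : 0 < r)
    (hs : 0 ≤ s) :
    0 < (1 - x ^ r) * (1 + s * (1 - x)) - r * x ^ r * (1 - x) := by
  have hkey := rpow_mul_one_add_mul_one_sub_lt_one hx0 hx1 hr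
  have hrpow_lt : x ^ r < 1 := rpow_lt_one hx0.le hx1 hr
  nlinarith [mul_nonneg (mul_nonneg hs (sub_pos.2 hx1).le) (sub_pos.2 hrpow_lt).le]

lemma rpow_sub_rpow_deriv_numerator_eq {x : ℝ} (hx : 0 < x) (p q : ℝ) :
    (p * x ^ (p - 1) - q * x ^ (q - 1)) * (x - 1) - (x ^ p - x ^ q) =
      x ^ (q - 1) *
        ((1 - x ^ (p - q)) * (1 + (q - 1) * (1 - x)) - (p - q) * x ^ (p - q) * (1 - x)) := by
  have hp : x ^ p = x ^ (q - 1) * x ^ (p - q) * x := by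
    rw [← rpow_add hx, ← rpow_add_one hx.ne']; ring_nf
  have hp' : x ^ (p - 1) = x ^ (q - 1) * x ^ (p - q) := by
    rw [← rpow_add hx]; ring_nf
  have hq : x ^ q = x ^ (q - 1) * x := by
    rw [← rpow_add_one hx.ne']; ring_nf
  rw [hp, hp', hq]
  ring

theorem h_strictMono (p q : ℝ) (hq : 1 ≤ q) (hpq : q < p) :
    StrictMonoOn (fun x : ℝ => (x ^ p - x ^ q) / (x - 1)) (Set.Ico 0 1) := by
  have hq0 : 0 ≤ q := by linarith
  have hp0 : 0 ≤ p := by linarith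
  apply strictMonoOn_of_deriv_pos (convex_Ico 0 1)
  · refine ContinuousOn.div (by fun_prop) (by fun_prop) fun x hx => ?_
    exact (sub_neg.2 hx.2).ne
  · intro x hx
    rw [interior_Ico] at hx
    obtain ⟨hx0, hx1⟩ := hx
    have hnum : HasDerivAt (fun y : ℝ => y ^ p - y ^ q)
        (p * x ^ (p - 1) - q * x ^ (q - 1)) x :=
      (hasDerivAt_rpow_const (Or.inl hx0.ne')).sub (hasDerivAt_rpow_const (Or.inl hx0.ne'))
    have hquot : HasDerivAt (fun y : ℝ => (y ^ p - y ^ q) / (y - 1))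
        (((p * x ^ (p - 1) - q * x ^ (q - 1)) * (x - 1) - (x ^ p - x ^ q) * 1) / (x - 1) ^ 2) x :=
      hnum.div ((hasDerivAt_id' x).sub_const 1) (sub_neg.2 hx1).ne
    rw [hquot.deriv, mul_one, rpow_sub_rpow_deriv_numerator_eq hx0]
    have hbracket := one_sub_rpow_mul_one_add_sub_pos hx0 hx1 (sub_pos.2 hpq) (sub_nonneg.2 hq)
    exact div_pos (mul_pos (rpow_pos_of_pos hx0 _) hbracket) (sq_pos_of_neg (sub_neg.2 hx1))
end

section
/- For all real numbers p > q ≥ 1, the strict inequality p + q + 1 > ((p+1)/(q+1))^{(p+q)/(p-q)} holds. -/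
/-!
Put `s = (p - q) / (p + q + 2)` and `t = (p + q) / (p + q + 2)`, so that `0 < s < t < 1`,
`(1 + s) / (1 - s) = (p + 1) / (q + 1)`, `(1 + t) / (1 - t) = p + q + 1` and `t / s` is the
exponent. The claim becomes `log ((1 + s) / (1 - s)) / s < log ((1 + t) / (1 - t)) / t`, i.e. that
`2 artanh x / x = 2 ∑ x ^ (2k) / (2k + 1)` is strictly increasing on `(0, 1)`, which is clear
from the power series.
-/

open Real Set

theorem Real.hasSum_log_sub_log_div_self {t : ℝ} (ht : |t| < 1) (ht₀ : t ≠ 0) :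
    HasSum (fun k : ℕ => 2 * (1 / (2 * k + 1)) * t ^ (2 * k))
      ((log (1 + t) - log (1 - t)) / t) := by
  simpa only [pow_succ, ← mul_assoc, mul_div_cancel_right₀ _ ht₀] using
    (hasSum_log_sub_log_of_abs_lt_one ht).div_const t

theorem Real.strictMonoOn_log_sub_log_div_self :
    StrictMonoOn (fun t => (log (1 + t) - log (1 - t)) / t) (Ioo 0 1) := by
  rintro s ⟨hs₀, hs₁⟩ t ⟨ht₀, ht₁⟩ hst
  refine hasSum_lt (i := 1) (fun k => ?_) ?_
    (hasSum_log_sub_log_div_self (by rw [abs_lt]; constructor <;> linarith) hs₀.ne')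
    (hasSum_log_sub_log_div_self (by rw [abs_lt]; constructor <;> linarith) ht₀.ne')
  · gcongr
  · norm_num
    nlinarith

theorem Real.one_add_div_one_sub_rpow_lt {s t : ℝ} (hs : 0 < s) (hst : s < t) (ht : t < 1) :
    ((1 + s) / (1 - s)) ^ (t / s) < (1 + t) / (1 - t) := by
  have key := strictMonoOn_log_sub_log_div_self ⟨hs, hst.trans ht⟩ ⟨hs.trans hst, ht⟩ hst
  have h₀ : 0 < (1 + s) / (1 - s) := div_pos (by linarith) (by linarith)
  dsimp only at key
  rw [← log_div (by linarith) (by linarith), ← log_div (by linarith) (by linarith),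
    div_lt_div_iff₀ hs (hs.trans hst)] at key
  rw [← log_lt_log_iff (rpow_pos_of_pos h₀ _) (div_pos (by linarith) (by linarith)),
    log_rpow h₀, div_mul_eq_mul_div, div_lt_iff₀ hs]
  linarith

theorem key_power_inequality (p q : ℝ) (hq : 1 ≤ q) (hpq : q < p) :
    ((p + 1) / (q + 1)) ^ ((p + q) / (p - q)) < p + q + 1 := by
  have hm : p + q + 2 ≠ 0 := by linarith
  have h := one_add_div_one_sub_rpow_lt (s := (p - q) / (p + q + 2))
    (t := (p + q) / (p + q + 2)) (div_pos (by linarith) (by linarith)) (by gcongr <;> linarith)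
    ((div_lt_one (by linarith)).2 (by linarith))
  rw [one_add_div hm, one_sub_div hm, one_add_div hm, one_sub_div hm,
    div_div_div_cancel_right₀ hm, div_div_div_cancel_right₀ hm, div_div_div_cancel_right₀ hm] at h
  convert h using 2
  · rw [div_eq_div_iff (by linarith) (by linarith)]; ring
  · field_simp; ring
end

section
/- The function h(x) = x · ln((x+1)/(x-1)) is nonincreasing on (1, ∞). -/
/-!
Expanding `log ((1 + t) / (1 - t)) = ∑ 2 t^(2k+1) / (2k+1)` at `t = x⁻¹` gives
`x * log ((x + 1) / (x - 1)) = ∑ 2 / (2k+1) * x⁻¹ ^ (2k)`, a series whose terms are all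
nonincreasing in `x > 1`.
-/

open Real Set

lemma log_one_add_inv_sub_log_one_sub_inv {x : ℝ} (hx : 1 < x) :
    log (1 + x⁻¹) - log (1 - x⁻¹) = log ((x + 1) / (x - 1)) := by
  have hx0 : x ≠ 0 := by positivity
  have hinv : x⁻¹ < 1 := inv_lt_one_of_one_lt₀ hx
  rw [← log_div (by positivity) (by linarith)]
  congr 1
  field_simp

lemma hasSum_mul_log_add_one_div_sub_one {x : ℝ} (hx : 1 < x) :
    HasSum (fun k : ℕ => 2 * (1 / (2 * k + 1)) * x⁻¹ ^ (2 * k))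
      (x * log ((x + 1) / (x - 1))) := by
  have habs : |x⁻¹| < 1 := by
    rw [abs_of_pos (by positivity)]
    exact inv_lt_one_of_one_lt₀ hx
  rw [← log_one_add_inv_sub_log_one_sub_inv hx]
  have hx0 : x ≠ 0 := by positivity
  have hterm : (fun k : ℕ => 2 * (1 / (2 * k + 1)) * x⁻¹ ^ (2 * k)) =
      fun k : ℕ => x * (2 * (1 / (2 * k + 1)) * x⁻¹ ^ (2 * k + 1)) := by
    ext k
    rw [pow_succ]
    field_simp
  rw [hterm]
  exact (hasSum_log_sub_log_of_abs_lt_one habs).mul_left x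

theorem h_antitone :
    AntitoneOn (fun x : ℝ => x * Real.log ((x + 1) / (x - 1))) (Set.Ioi 1) := by
  intro a ha b hb hab
  refine hasSum_le (fun k => ?_) (hasSum_mul_log_add_one_div_sub_one hb)
    (hasSum_mul_log_add_one_div_sub_one ha)
  have ha0 : 0 < a := lt_trans one_pos ha
  have hb0 : 0 < b := lt_trans one_pos hb
  gcongr
end

section
/- Let a > b > 0 be real numbers. Then ln(a+1)/a ≥ (1/b) · ln(1 + 2b/(a - b + 2)), with equality if and only if a = b; in particular for a > b the inequality is strict. -/
/-!
With `c = a + 2`, both sides are secant slopes through the origin of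
`g t = log (c + t) - log (c - t)`: indeed `g b = log (1 + 2b/(a - b + 2))` and
`g a = log ((2a + 2)/2) = log (a + 1)`. Since `g' t = 2c/(c² - t²)` increases on `[0, c)`,
`g` is strictly convex there, so `g t / t` is strictly increasing.
-/

open Real

namespace LogRatio

variable {c : ℝ}

lemma hasDerivAt_log_add_sub_log_sub {t : ℝ} (hct : 0 < c + t) (htc : 0 < c - t) :
    HasDerivAt (fun s => log (c + s) - log (c - s)) (2 * c / (c ^ 2 - t ^ 2)) t := by
  have hplus : HasDerivAt (fun s => log (c + s)) (1 / (c + t)) t :=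
    ((hasDerivAt_id t).const_add c).log hct.ne'
  have hminus : HasDerivAt (fun s => log (c - s)) (-1 / (c - t)) t :=
    ((hasDerivAt_id t).const_sub c).log htc.ne'
  refine (hplus.sub hminus).congr_deriv ?_
  have hsq : c ^ 2 - t ^ 2 = (c + t) * (c - t) := by ring
  rw [hsq]
  field_simp
  ring

lemma strictConvexOn_log_add_sub_log_sub :
    StrictConvexOn ℝ (Set.Ico 0 c) (fun t => log (c + t) - log (c - t)) := by
  apply StrictMonoOn.strictConvexOn_of_deriv (convex_Ico 0 c)
  · have hplus : ContinuousOn (fun t => log (c + t)) (Set.Ico 0 c) :=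
      ContinuousOn.log (by fun_prop) fun t ht => by linarith [ht.1, ht.2]
    have hminus : ContinuousOn (fun t => log (c - t)) (Set.Ico 0 c) :=
      ContinuousOn.log (by fun_prop) fun t ht => by linarith [ht.1, ht.2]
    exact hplus.sub hminus
  · rw [interior_Ico]
    intro s hs t ht hst
    rw [(hasDerivAt_log_add_sub_log_sub (by linarith [hs.1, hs.2]) (by linarith [hs.2])).deriv,
      (hasDerivAt_log_add_sub_log_sub (by linarith [ht.1, ht.2]) (by linarith [ht.2])).deriv]
    have hc : 0 < c := hs.1.trans hs.2
    exact div_lt_div_of_pos_left (by positivity) (by nlinarith [ht.1, ht.2])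
      (by nlinarith [hs.1])

lemma strictMonoOn_log_add_sub_log_sub_div :
    StrictMonoOn (fun t => (log (c + t) - log (c - t)) / t) (Set.Ioo 0 c) := by
  intro s hs t ht hst
  have hsec := strictConvexOn_log_add_sub_log_sub.secant_strict_mono (a := 0)
    ⟨le_rfl, hs.1.trans hs.2⟩ (Set.Ioo_subset_Ico_self hs) (Set.Ioo_subset_Ico_self ht)
    hs.1.ne' ht.1.ne' hst
  simpa using hsec

end LogRatio

open LogRatio in
theorem log_inequality_ab (a b : ℝ) (hb : 0 < b) (hab : b < a) :
    (1 / b) * Real.log (1 + 2 * b / (a - b + 2)) < Real.log (a + 1) / a := by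
  have hslopes :
      (log (a + 2 + b) - log (a + 2 - b)) / b < (log (a + 2 + a) - log (a + 2 - a)) / a :=
    strictMonoOn_log_add_sub_log_sub_div ⟨hb, by linarith⟩ ⟨hb.trans hab, by linarith⟩ hab
  have hleft : log (a + 2 + b) - log (a + 2 - b) = log (1 + 2 * b / (a - b + 2)) := by
    rw [← log_div (by linarith) (by linarith)]
    congr 1
    field_simp [show a - b + 2 ≠ 0 by linarith, show a + 2 - b ≠ 0 by linarith]
    ring
  have hright : log (a + 2 + a) - log (a + 2 - a) = log (a + 1) := by
    rw [show a + 2 + a = 2 * (a + 1) by ring, add_sub_cancel_left,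
      log_mul two_ne_zero (by linarith)]
    ring
  rw [hleft, hright] at hslopes
  rwa [one_div_mul_eq_div]
end

section
/- Let p > q ≥ 1 and n = p + q + 1, k > 0, c = kn. Then the system of equations y^n - x^n = n(y - x) and y^{p+1}/(p+1) - x^{p+1}/(p+1) = y^{q+1}/(q+1) - x^{q+1}/(q+1) has no solution (x,y) with 0 < x < 1 < y. -/
/-!
Write `μ = (log x + log y) / 2`, `ℓ = (log y - log x) / 2` and `G w = log (sinh w / w)`. Since
`y ^ m - x ^ m = 2 exp (μ m) sinh (ℓ m)`, we get
`log ((y ^ m - x ^ m) / m) = μ m + log (2 ℓ) + G (ℓ m)`, so the two equations say that the secants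
of `G` over `[ℓ, ℓ n]` and over `[ℓ (q + 1), ℓ (p + 1)]` both have slope `-μ / ℓ`. These intervals
are nested and have the same midpoint. But `G'' w = 1 / w ^ 2 - 1 / sinh w ^ 2` is strictly
decreasing (this is Lazarevic's inequality `w ^ 3 cosh w < sinh w ^ 3`), so
`t ↦ G (s + t) - G (s - t)` is strictly concave and vanishes at `0`; hence its secant slopes
through `0` strictly decrease, and the outer secant is strictly less steep than the inner one.
-/

open Real Set Filter Topology

namespace Real

theorem sinh_lt_mul_cosh {w : ℝ} (hw : 0 < w) : sinh w < w * cosh w := by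
  have hmono : StrictMonoOn (fun w : ℝ => w * cosh w - sinh w) (Ici 0) := by
    refine strictMonoOn_of_hasDerivWithinAt_pos (convex_Ici 0) (by fun_prop)
      (f' := fun w => w * sinh w) (fun u _ => ?_) fun u hu => ?_
    · refine (((hasDerivAt_id u).mul (hasDerivAt_cosh u)).sub (hasDerivAt_sinh u)).congr_deriv
        ?_ |>.hasDerivWithinAt
      simp only [id_eq]
      ring
    · rw [interior_Ici] at hu
      exact mul_pos hu (sinh_pos_iff.2 hu)
  simpa using hmono self_mem_Ici hw.le hw

theorem three_mul_sinh_mul_cosh_lt {w : ℝ} (hw : 0 < w) :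
    3 * sinh w * cosh w < w * (2 * cosh w ^ 2 + 1) := by
  have hmono : StrictMonoOn (fun w : ℝ => w * (2 * cosh w ^ 2 + 1) - 3 * sinh w * cosh w)
      (Ici 0) := by
    refine strictMonoOn_of_hasDerivWithinAt_pos (convex_Ici 0) (by fun_prop)
      (f' := fun w => 4 * sinh w * (w * cosh w - sinh w)) (fun u _ => ?_) fun u hu => ?_
    · refine (((hasDerivAt_id u).mul ((((hasDerivAt_cosh u).pow 2).const_mul 2).add_const 1)).sub
        (((hasDerivAt_sinh u).const_mul 3).mul (hasDerivAt_cosh u))).congr_deriv ?_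
        |>.hasDerivWithinAt
      simp only [id_eq, Pi.pow_apply]
      linear_combination (-1) * cosh_sq u
    · rw [interior_Ici] at hu
      exact mul_pos (mul_pos four_pos (sinh_pos_iff.2 hu)) (sub_pos.2 (sinh_lt_mul_cosh hu))
  simpa using hmono self_mem_Ici hw.le hw

theorem tendsto_sinh_div_self : Tendsto (fun w => sinh w / w) (𝓝[≠] 0) (𝓝 1) := by
  simpa [div_eq_inv_mul] using (hasDerivAt_sinh 0).tendsto_slope_zero

theorem hasDerivAt_log_sinh_div_self {w : ℝ} (hw : w ≠ 0) :
    HasDerivAt (fun w => log (sinh w / w)) (cosh w / sinh w - w⁻¹) w := by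
  have hs : sinh w ≠ 0 := sinh_ne_zero.2 hw
  refine (((hasDerivAt_sinh w).div (hasDerivAt_id' w) hw).log (div_ne_zero hs hw)).congr_deriv ?_
  simp only [Pi.div_apply]
  field_simp

theorem hasDerivAt_cosh_div_sinh_sub_inv {w : ℝ} (hw : w ≠ 0) :
    HasDerivAt (fun w => cosh w / sinh w - w⁻¹) ((w ^ 2)⁻¹ - (sinh w ^ 2)⁻¹) w := by
  have hs : sinh w ≠ 0 := sinh_ne_zero.2 hw
  refine (((hasDerivAt_cosh w).div (hasDerivAt_sinh w) hs).sub (hasDerivAt_inv hw)).congr_deriv ?_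
  field_simp
  linear_combination (-w ^ 2) * cosh_sq w

theorem pow_three_mul_cosh_lt_sinh_pow_three {w : ℝ} (hw : 0 < w) :
    w ^ 3 * cosh w < sinh w ^ 3 := by
  set F : ℝ → ℝ := fun w => 3 * log (sinh w / w) - log (cosh w)
  have hmono : StrictMonoOn F (Ioi 0) := by
    refine strictMonoOn_of_hasDerivWithinAt_pos (convex_Ioi 0)
      (f' := fun w => 3 * (cosh w / sinh w - w⁻¹) - sinh w / cosh w) (fun u hu => ?_)
      (fun u hu => ?_) fun u hu => ?_
    · exact ((hasDerivAt_log_sinh_div_self hu.ne').const_mul 3 |>.sub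
        ((hasDerivAt_cosh u).log (cosh_pos u).ne')).continuousAt.continuousWithinAt
    · rw [interior_Ioi] at hu
      exact ((hasDerivAt_log_sinh_div_self hu.ne').const_mul 3 |>.sub
        ((hasDerivAt_cosh u).log (cosh_pos u).ne')).hasDerivWithinAt
    · rw [interior_Ioi, mem_Ioi] at hu
      have hs := sinh_pos_iff.2 hu
      have hc := cosh_pos u
      have key : 3 * (cosh u / sinh u - u⁻¹) - sinh u / cosh u
          = (u * (2 * cosh u ^ 2 + 1) - 3 * sinh u * cosh u) / (u * sinh u * cosh u) := by
        field_simp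
        linear_combination u * cosh_sq u
      rw [key]
      exact div_pos (sub_pos.2 (three_mul_sinh_mul_cosh_lt hu)) (by positivity)
  have hlim : Tendsto F (𝓝[>] 0) (𝓝 0) := by
    have h := ((tendsto_sinh_div_self.log one_ne_zero).const_mul 3).sub
      (((continuous_cosh.tendsto 0).mono_left nhdsWithin_le_nhds).log (cosh_pos 0).ne')
    simpa [F] using h.mono_left (nhdsGT_le_nhdsNE 0)
  have hF : 0 < F w := by
    have hhalf : F (w / 2) < F w := hmono (half_pos hw) hw (half_lt_self hw)
    refine lt_of_le_of_lt (le_of_tendsto hlim ?_) hhalf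
    filter_upwards [Ioo_mem_nhdsGT (half_pos hw)] with u hu
    exact (hmono hu.1 (half_pos hw) hu.2).le
  have hs := sinh_pos_iff.2 hw
  rw [← log_lt_log_iff (by positivity) (by positivity), log_mul (by positivity) (cosh_pos w).ne',
    log_pow, log_pow]
  simp only [F, log_div hs.ne' hw.ne'] at hF
  push_cast
  linarith

theorem strictAntiOn_inv_sq_sub_inv_sinh_sq :
    StrictAntiOn (fun w => (w ^ 2)⁻¹ - (sinh w ^ 2)⁻¹) (Ioi 0) := by
  have hderiv : ∀ w : ℝ, w ≠ 0 → HasDerivAt (fun w => (w ^ 2)⁻¹ - (sinh w ^ 2)⁻¹)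
      (2 * (w ^ 3 * cosh w - sinh w ^ 3) / (w ^ 3 * sinh w ^ 3)) w := by
    intro w hw
    have hs : sinh w ≠ 0 := sinh_ne_zero.2 hw
    refine (((hasDerivAt_pow 2 w).inv (pow_ne_zero 2 hw)).sub
      (((hasDerivAt_sinh w).pow 2).inv (pow_ne_zero 2 hs))).congr_deriv ?_
    simp only [Pi.pow_apply]
    field_simp
    ring
  refine strictAntiOn_of_hasDerivWithinAt_neg (convex_Ioi 0)
    (fun w hw => (hderiv w (ne_of_gt hw)).continuousAt.continuousWithinAt)
    (fun w hw => (hderiv w (interior_subset (s := Ioi 0) hw).ne').hasDerivWithinAt) fun w hw => ?_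
  rw [interior_Ioi, mem_Ioi] at hw
  have hs := sinh_pos_iff.2 hw
  exact div_neg_of_neg_of_pos (by linarith [pow_three_mul_cosh_lt_sinh_pow_three hw])
    (by positivity)

end Real

theorem strictConcaveOn_of_hasDerivAt2_neg {D : Set ℝ} (hD : Convex ℝ D) {f f' f'' : ℝ → ℝ}
    (hf : ContinuousOn f D) (hf' : ∀ x ∈ interior D, HasDerivAt f (f' x) x)
    (hf'' : ∀ x ∈ interior D, HasDerivAt f' (f'' x) x) (hf''₀ : ∀ x ∈ interior D, f'' x < 0) :
    StrictConcaveOn ℝ D f := by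
  have hanti : StrictAntiOn f' (interior D) := by
    refine strictAntiOn_of_hasDerivWithinAt_neg (f' := f'') hD.interior
      (fun x hx => (hf'' x hx).continuousAt.continuousWithinAt) (fun x hx => ?_) fun x hx => ?_ <;>
      rw [interior_interior] at hx
    exacts [(hf'' x hx).hasDerivWithinAt, hf''₀ x hx]
  exact (hanti.congr fun x hx => (hf' x hx).deriv.symm).strictConcaveOn_of_deriv hD hf

section SymmetricDifference

variable {g g' g'' : ℝ → ℝ}

theorem strictConcaveOn_comp_add_sub_comp_sub (hg : ∀ w, 0 < w → HasDerivAt g (g' w) w)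
    (hg' : ∀ w, 0 < w → HasDerivAt g' (g'' w) w) (hg'' : StrictAntiOn g'' (Ioi 0)) (s : ℝ) :
    StrictConcaveOn ℝ (Ico 0 s) (fun t => g (s + t) - g (s - t)) := by
  have hpos : ∀ t ∈ Ico 0 s, 0 < s + t ∧ 0 < s - t := fun t ht => by
    constructor <;> linarith [ht.1, ht.2]
  have hD : ∀ t ∈ Ico 0 s, HasDerivAt (fun t => g (s + t) - g (s - t))
      (g' (s + t) + g' (s - t)) t := fun t ht =>
    (((hg _ (hpos t ht).1).comp_const_add s t).sub
      ((hg _ (hpos t ht).2).comp_const_sub s t)).congr_deriv (sub_neg_eq_add _ _)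
  have hD' : ∀ t ∈ Ico 0 s, HasDerivAt (fun t => g' (s + t) + g' (s - t))
      (g'' (s + t) - g'' (s - t)) t := fun t ht =>
    (((hg' _ (hpos t ht).1).comp_const_add s t).add
      ((hg' _ (hpos t ht).2).comp_const_sub s t)).congr_deriv (sub_eq_add_neg _ _).symm
  refine strictConcaveOn_of_hasDerivAt2_neg (convex_Ico 0 s)
    (fun t ht => (hD t ht).continuousAt.continuousWithinAt)
    (fun t ht => hD t (interior_subset ht)) (fun t ht => hD' t (interior_subset ht))
    fun t ht => ?_
  rw [interior_Ico] at ht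
  have := hg'' (hpos t (Ioo_subset_Ico_self ht)).2 (hpos t (Ioo_subset_Ico_self ht)).1
    (by linarith [ht.1])
  linarith

theorem secant_slope_outer_lt_inner (hg : ∀ w, 0 < w → HasDerivAt g (g' w) w)
    (hg' : ∀ w, 0 < w → HasDerivAt g' (g'' w) w) (hg'' : StrictAntiOn g'' (Ioi 0))
    {a b c d : ℝ} (ha : 0 < a) (hab : a < b) (hbc : b < c) (hsum : a + d = b + c) :
    (g d - g a) / (d - a) < (g c - g b) / (c - b) := by
  have key := (strictConcaveOn_comp_add_sub_comp_sub hg hg' hg'' ((a + d) / 2)).secant_strict_mono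
    (a := 0) (x := (c - b) / 2) (y := (d - a) / 2) ⟨le_rfl, by linarith⟩
    ⟨by linarith, by linarith⟩ ⟨by linarith, by linarith⟩ (by linarith) (by linarith)
    (by linarith)
  have e1 : (a + d) / 2 + (d - a) / 2 = d := by ring
  have e2 : (a + d) / 2 - (d - a) / 2 = a := by ring
  have e3 : (a + d) / 2 + (c - b) / 2 = c := by linarith
  have e4 : (a + d) / 2 - (c - b) / 2 = b := by linarith
  simp only [add_zero, sub_zero, sub_self, e1, e2, e3, e4] at key
  have halve : ∀ x y : ℝ, x / (y / 2) = 2 * (x / y) := fun x y => by ring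
  rw [halve, halve] at key
  linarith

end SymmetricDifference

namespace Real

theorem rpow_sub_rpow_eq_two_mul_exp_mul_sinh {x y : ℝ} (hx : 0 < x) (hy : 0 < y) (m : ℝ) :
    y ^ m - x ^ m = 2 * exp ((log x + log y) / 2 * m) * sinh ((log y - log x) / 2 * m) := by
  calc y ^ m - x ^ m = exp ((log x + log y) / 2 * m) * exp ((log y - log x) / 2 * m) -
        exp ((log x + log y) / 2 * m) * exp (-((log y - log x) / 2 * m)) := by
        rw [← exp_add, ← exp_add, rpow_def_of_pos hx, rpow_def_of_pos hy]
        congr 2 <;> ring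
    _ = 2 * exp ((log x + log y) / 2 * m) * sinh ((log y - log x) / 2 * m) := by
        rw [sinh_eq]
        ring

theorem log_rpow_sub_rpow_div {x y m : ℝ} (hx : 0 < x) (hxy : x < y) (hm : 0 < m) :
    log ((y ^ m - x ^ m) / m) = (log x + log y) / 2 * m + log (log y - log x) +
      log (sinh ((log y - log x) / 2 * m) / ((log y - log x) / 2 * m)) := by
  have hL : 0 < log y - log x := sub_pos.2 (log_lt_log hx hxy)
  have hw : 0 < (log y - log x) / 2 * m := by positivity
  have hs : 0 < sinh ((log y - log x) / 2 * m) := sinh_pos_iff.2 hw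
  have hfactor : (y ^ m - x ^ m) / m = exp ((log x + log y) / 2 * m) * (log y - log x) *
      (sinh ((log y - log x) / 2 * m) / ((log y - log x) / 2 * m)) := by
    rw [rpow_sub_rpow_eq_two_mul_exp_mul_sinh hx (hx.trans hxy)]
    field_simp
  rw [hfactor, log_mul (by positivity) (by positivity), log_mul (by positivity) hL.ne', log_exp]

end Real

theorem no_solution_critical_case (p q n k c : ℝ) (hq : 1 ≤ q) (hpq : q < p)
    (hn : n = p + q + 1) (hk : 0 < k) (hc : c = k * n) :
    ¬ ∃ x y : ℝ, 0 < x ∧ x < 1 ∧ 1 < y ∧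
      y ^ n - x ^ n = (c / k) * (y - x) ∧
      y ^ (p + 1) / (p + 1) - x ^ (p + 1) / (p + 1) =
        y ^ (q + 1) / (q + 1) - x ^ (q + 1) / (q + 1) := by
  rintro ⟨x, y, hx, hx1, hy1, hout, hin⟩
  have hxy : x < y := hx1.trans hy1
  have hn0 : 0 < n := by linarith
  have hout' : (y ^ n - x ^ n) / n = (y ^ (1 : ℝ) - x ^ (1 : ℝ)) / 1 := by
    rw [hout, hc, mul_div_cancel_left₀ _ hk.ne', mul_div_cancel_left₀ _ hn0.ne', rpow_one,
      rpow_one, div_one]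
  rw [← sub_div, ← sub_div] at hin
  replace hout' := congrArg log hout'
  replace hin := congrArg log hin
  rw [log_rpow_sub_rpow_div hx hxy hn0, log_rpow_sub_rpow_div hx hxy one_pos] at hout'
  rw [log_rpow_sub_rpow_div hx hxy (by linarith), log_rpow_sub_rpow_div hx hxy (by linarith)] at hin
  set μ := (log x + log y) / 2
  set ℓ := (log y - log x) / 2
  have hℓ : 0 < ℓ := half_pos (sub_pos.2 (log_lt_log hx hxy))
  have key := secant_slope_outer_lt_inner (g := fun w => log (sinh w / w))
    (fun w hw => hasDerivAt_log_sinh_div_self hw.ne')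
    (fun w hw => hasDerivAt_cosh_div_sinh_sub_inv hw.ne') strictAntiOn_inv_sq_sub_inv_sinh_sq
    (a := ℓ * 1) (b := ℓ * (q + 1)) (c := ℓ * (p + 1)) (d := ℓ * n) (by positivity)
    (by gcongr; linarith) (by gcongr) (by rw [hn]; ring)
  rw [show log (sinh (ℓ * n) / (ℓ * n)) - log (sinh (ℓ * 1) / (ℓ * 1)) = -μ * (n - 1) by linarith,
    show log (sinh (ℓ * (p + 1)) / (ℓ * (p + 1))) - log (sinh (ℓ * (q + 1)) / (ℓ * (q + 1)))
      = -μ * (p - q) by linarith,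
    show ℓ * n - ℓ * 1 = ℓ * (n - 1) by ring, show ℓ * (p + 1) - ℓ * (q + 1) = ℓ * (p - q) by ring,
    mul_div_mul_right _ _ (by linarith), mul_div_mul_right _ _ (by linarith)] at key
  exact lt_irrefl _ key
end

section
/- Let n ≥ 2, p > q ≥ 1, k > 0 and c ≥ kn + 2√(p-q). Then there exists m > 0 such that m² - m(c - kn) + (p - q) ≤ 0; moreover for any such m and any X ∈ [0,1], the quantity F(X) = (X-1)[m² - mc + mknX^{n-1} + (X^p - X^q)/(X-1)] is nonnegative. -/
open Real Set

lemma aux_key (p q : ℝ) (hq : 1 ≤ q) (hpq : q < p) (X : ℝ) (h0 : 0 ≤ X) (h1 : X < 1) :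
    (X ^ p - X ^ q) / (X - 1) ≤ p - q := by
  rcases eq_or_lt_of_le h0 with h0 | h0
  · subst h0
    rw [Real.zero_rpow (by linarith), Real.zero_rpow (by linarith)]
    norm_num; linarith
  · have hlog : Real.log X ≤ 0 := Real.log_nonpos (le_of_lt h0) (le_of_lt h1)
    have hr : (0:ℝ) < p - q := by linarith
    -- 1 - X^(p-q) ≤ -((p-q) * log X)
    have h1' : 1 - X ^ (p - q) ≤ -((p - q) * Real.log X) := by
      have := Real.add_one_le_exp ((p - q) * Real.log X)
      rw [Real.rpow_def_of_pos h0, mul_comm (Real.log X)]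
      linarith
    -- X^q - X^p = X^q * (1 - X^(p-q))
    have h2 : X ^ q - X ^ p = X ^ q * (1 - X ^ (p - q)) := by
      rw [mul_sub, mul_one, ← Real.rpow_add h0]
      ring_nf
    have hXq_nonneg : 0 ≤ X ^ q := Real.rpow_nonneg (le_of_lt h0) q
    have hXq_le : X ^ q ≤ X := by
      have := Real.rpow_le_rpow_of_exponent_ge h0 (le_of_lt h1) hq
      rwa [Real.rpow_one] at this
    have h3 : X ^ q * (1 - X ^ (p - q)) ≤ X ^ q * (-((p - q) * Real.log X)) :=
      mul_le_mul_of_nonneg_left h1' hXq_nonneg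
    have h4 : X ^ q * (-Real.log X) ≤ X * (-Real.log X) :=
      mul_le_mul_of_nonneg_right hXq_le (by linarith)
    have h5 : X * (-Real.log X) ≤ 1 - X := by
      have hinv : Real.log (1 / X) ≤ 1 / X - 1 :=
        Real.log_le_sub_one_of_pos (by positivity)
      rw [Real.log_div one_ne_zero (ne_of_gt h0), Real.log_one] at hinv
      have := mul_le_mul_of_nonneg_left hinv (le_of_lt h0)
      calc X * (-Real.log X) = X * (0 - Real.log X) := by ring
        _ ≤ X * (1 / X - 1) := mul_le_mul_of_nonneg_left (by linarith) (le_of_lt h0)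
        _ = 1 - X := by field_simp
    have hmain : X ^ q - X ^ p ≤ (p - q) * (1 - X) := by
      calc X ^ q - X ^ p = X ^ q * (1 - X ^ (p - q)) := h2
        _ ≤ X ^ q * (-((p - q) * Real.log X)) := h3
        _ = (p - q) * (X ^ q * (-Real.log X)) := by ring
        _ ≤ (p - q) * (X * (-Real.log X)) := mul_le_mul_of_nonneg_left h4 (le_of_lt hr)
        _ ≤ (p - q) * (1 - X) := mul_le_mul_of_nonneg_left h5 (le_of_lt hr)
    have hrw : (X ^ p - X ^ q) / (X - 1) = (X ^ q - X ^ p) / (1 - X) := by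
      rw [← neg_div_neg_eq]; ring_nf
    rw [hrw]
    rw [div_le_iff₀ (by linarith : (0:ℝ) < 1 - X)]
    linarith [hmain]

theorem flow_nonneg_large_c (n p q k c : ℝ) (hn : 2 ≤ n) (hq : 1 ≤ q) (hpq : q < p)
    (hk : 0 < k) (hc : k * n + 2 * Real.sqrt (p - q) ≤ c) :
    (∃ m : ℝ, 0 < m ∧ m ^ 2 - m * (c - k * n) + (p - q) ≤ 0) ∧
    (∀ m : ℝ, 0 < m → m ^ 2 - m * (c - k * n) + (p - q) ≤ 0 →
      ∀ X ∈ Set.Icc (0 : ℝ) 1,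
        0 ≤ (X - 1) *
          (m ^ 2 - m * c + m * k * n * X ^ (n - 1) + (X ^ p - X ^ q) / (X - 1))) := by
  have hr : (0:ℝ) < p - q := by linarith
  constructor
  · refine ⟨Real.sqrt (p - q), Real.sqrt_pos.mpr hr, ?_⟩
    have hsq : Real.sqrt (p - q) ^ 2 = p - q := Real.sq_sqrt (le_of_lt hr)
    nlinarith [Real.sqrt_pos.mpr hr]
  · intro m hm hm2 X hX
    obtain ⟨hX0, hX1⟩ := hX
    rcases eq_or_lt_of_le hX1 with hX1 | hX1
    · subst hX1; simp
    · have hXn : X ^ (n - 1) ≤ 1 :=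
        Real.rpow_le_one hX0 (le_of_lt hX1) (by linarith)
      have hdiv : (X ^ p - X ^ q) / (X - 1) ≤ p - q := aux_key p q hq hpq X hX0 hX1
      have hbr : m ^ 2 - m * c + m * k * n * X ^ (n - 1) + (X ^ p - X ^ q) / (X - 1) ≤ 0 := by
        have hmkn : 0 < m * k * n := by positivity
        nlinarith [mul_le_mul_of_nonneg_left hXn (le_of_lt hmkn)]
      nlinarith [hbr]
end

section
/- Let n ≥ 2, p > q ≥ 1, k > 0 and c ≤ -2√(p-q). Then there exists m > 0 with c ≤ -m - (p-q)/m, and for any such m and any X ∈ (0,1), the quantity G(X) = (X-1)[m² + mc - kmnX^{n-1} + (X^p - X^q)/(X-1)] is strictly positive. -/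
/-! With `m = √(p - q)` the bound `c ≤ -m - (p - q)/m` is exactly the hypothesis on `c`.
For `X ∈ (0, 1)` the factor `X - 1` is negative, so it suffices that the bracket is negative:
multiplying the bound on `c` by `m` gives `m² + mc ≤ -(p - q)`, the term `kmnX^{n-1}` is positive,
and by Bernoulli's inequality the difference quotient `(X^p - X^q)/(X - 1)` is at most `p - q`. -/

open Real Set

lemma sqrt_add_div_sqrt (d : ℝ) : √d + d / √d = 2 * √d := by
  rw [div_sqrt]; ring

lemma mul_one_sub_rpow_le {x d : ℝ} (hx0 : 0 < x) (hd : 0 ≤ d) :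
    x * (1 - x ^ d) ≤ d * (1 - x) := by
  have bernoulli : 1 + (1 + d) * (x - 1) ≤ x * x ^ d := by
    have := one_add_mul_self_le_rpow_one_add (s := x - 1) (by linarith) (p := 1 + d) (by linarith)
    rwa [add_sub_cancel, rpow_add hx0, rpow_one] at this
  linarith

lemma rpow_sub_rpow_le_mul_one_sub {x p q : ℝ} (hx0 : 0 < x) (hx1 : x ≤ 1) (hq : 1 ≤ q)
    (hqp : q ≤ p) : x ^ q - x ^ p ≤ (p - q) * (1 - x) := by
  have hsplit : x ^ p = x ^ q * x ^ (p - q) := by rw [← rpow_add hx0, add_sub_cancel]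
  have hxq : x ^ q ≤ x := by simpa using rpow_le_rpow_of_exponent_ge hx0 hx1 hq
  have hfactor : 0 ≤ 1 - x ^ (p - q) := sub_nonneg.mpr (rpow_le_one hx0.le hx1 (by linarith))
  calc x ^ q - x ^ p = x ^ q * (1 - x ^ (p - q)) := by rw [hsplit]; ring
    _ ≤ x * (1 - x ^ (p - q)) := mul_le_mul_of_nonneg_right hxq hfactor
    _ ≤ (p - q) * (1 - x) := mul_one_sub_rpow_le hx0 (by linarith)

lemma rpow_sub_rpow_div_sub_one_le {x p q : ℝ} (hx : x ∈ Ioo (0 : ℝ) 1) (hq : 1 ≤ q)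
    (hqp : q ≤ p) : (x ^ p - x ^ q) / (x - 1) ≤ p - q := by
  rw [div_le_iff_of_neg (by linarith [hx.2])]
  linarith [rpow_sub_rpow_le_mul_one_sub hx.1 hx.2.le hq hqp]

lemma sq_add_mul_le_neg_of_le_neg_sub_div {m c d : ℝ} (hm : 0 < m) (hc : c ≤ -m - d / m) :
    m ^ 2 + m * c ≤ -d := by
  have : m * c ≤ m * (-m - d / m) := mul_le_mul_of_nonneg_left hc hm.le
  rw [mul_sub, mul_div_cancel₀ d hm.ne'] at this
  nlinarith

theorem flow_pos_small_c (n p q k c : ℝ) (hn : 2 ≤ n) (hq : 1 ≤ q) (hpq : q < p)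
    (hk : 0 < k) (hc : c ≤ -2 * Real.sqrt (p - q)) :
    (∃ m : ℝ, 0 < m ∧ c ≤ -m - (p - q) / m) ∧
    (∀ m : ℝ, 0 < m → c ≤ -m - (p - q) / m →
      ∀ X ∈ Set.Ioo (0 : ℝ) 1,
        0 < (X - 1) *
          (m ^ 2 + m * c - k * m * n * X ^ (n - 1) + (X ^ p - X ^ q) / (X - 1))) := by
  refine ⟨⟨√(p - q), sqrt_pos.mpr (sub_pos.mpr hpq), ?_⟩, ?_⟩
  · linarith [sqrt_add_div_sqrt (p - q)]
  rintro m hm hcm X hX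
  have hquad := sq_add_mul_le_neg_of_le_neg_sub_div hm hcm
  have hquot := rpow_sub_rpow_div_sub_one_le hX hq hpq.le
  have hflow : 0 < k * m * n * X ^ (n - 1) :=
    mul_pos (mul_pos (mul_pos hk hm) (by linarith)) (rpow_pos_of_pos hX.1 _)
  exact mul_pos_of_neg_of_neg (by linarith [hX.2]) (by linarith)
end
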